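/- Let y ∈ ℂ[x] be a monic squarefree polynomial of degree l with roots t_1,…,t_l, let h ∈ ℂ be such that y(x) and y(x+h) have no common roots, and let R ∈ ℂ[x] with gcd(R, y) = 1 and gcd(R(x), y(x+h)) having no roots at the roots of y shifted. Then there exists a polynomial ỹ ∈ ℂ[x] with y(x+h)ỹ(x) − y(x)ỹ(x+h) = R(x) if and only if for each j = 1,…,l: R(t_j)/(y'(t_j) y(t_j+h)) + R(t_j−h)/(y'(t_j) y(t_j−h)) = 0, i.e. R(t_j)·y(t_j−h) + R(t_j−h)·y(t_j+h) = 0. -/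

import Mathlib

/-!
Write `W(ỹ) = y(x + h) ỹ(x) - y(x) ỹ(x + h)`. At a root `t` of `y`, `W(ỹ)(t) = y(t + h) ỹ(t)` and
`W(ỹ)(t - h) = -y(t - h) ỹ(t)`; eliminating `ỹ(t)` gives the residue condition. Conversely, take
`y₀` interpolating `ỹ(t) = R(t) / y(t + h)` at the roots: by the residue condition `W(y₀)` agrees
with `R` at the `2l` distinct points `t`, `t - h`, so `R - W(y₀) = y(x) y(x + h) P`. As
`W(y₀ - y q) = W(y₀) + y(x) y(x + h) (q(x + h) - q(x))`, it remains to solve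
`q(x + h) - q(x) = P`, which is possible in characteristic zero because this difference operator
sends `x^(n+1)` to `(n + 1) h x^n` plus lower terms.
-/

open Polynomial Finset Lagrange

namespace Polynomial

section CommRing

variable {A : Type*} [CommRing A]

noncomputable def forwardDifference (h : A) : A[X] →ₗ[A] A[X] :=
  taylor h - LinearMap.id

theorem forwardDifference_apply (h : A) (p : A[X]) :
    forwardDifference h p = p.comp (X + C h) - p := by
  simp [forwardDifference, taylor_apply]

theorem forwardDifference_X_pow_succ (h : A) (n : ℕ) :
    forwardDifference h (X ^ (n + 1)) =
      C ((n + 1) * h) * X ^ n + ∑ k ∈ range n, C (h ^ (n + 1 - k) * (n + 1).choose k) * X ^ k := by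
  have hsum : ∑ k ∈ range n, X ^ k * C h ^ (n + 1 - k) * ((n + 1).choose k : A[X]) =
      ∑ k ∈ range n, C (h ^ (n + 1 - k) * (n + 1).choose k) * X ^ k :=
    sum_congr rfl fun k _ => by rw [C_mul, C_pow, C_eq_natCast]; ring
  rw [forwardDifference_apply, X_pow_comp, add_pow, sum_range_succ, sum_range_succ, hsum]
  simp only [map_mul, map_pow, map_natCast, add_tsub_cancel_left, pow_one, X_pow_mul_C,
    Nat.choose_succ_self_right, Nat.cast_add, Nat.cast_one, tsub_self, pow_zero, mul_one,
    Nat.choose_self, add_sub_cancel_right, map_add, map_one]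
  ring

end CommRing

section Field

variable {K : Type*} [Field K] [CharZero K] {h : K}

theorem X_pow_mem_range_forwardDifference (hh : h ≠ 0) (n : ℕ) :
    (X ^ n : K[X]) ∈ LinearMap.range (forwardDifference h) := by
  induction n using Nat.strong_induction_on with
  | _ n ih =>
  have hn : ((n : K) + 1) * h ≠ 0 := mul_ne_zero (Nat.cast_add_one_ne_zero n) hh
  have hX : (X ^ n : K[X]) = (((n : K) + 1) * h)⁻¹ • (forwardDifference h (X ^ (n + 1)) -
      ∑ k ∈ range n, (h ^ (n + 1 - k) * (n + 1).choose k) • X ^ k) := by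
    simp only [forwardDifference_X_pow_succ, smul_eq_C_mul, add_sub_cancel_right, ← mul_assoc,
      ← C_mul, inv_mul_cancel₀ hn, C_1, one_mul]
  rw [hX]
  exact Submodule.smul_mem _ _ (sub_mem (LinearMap.mem_range_self _ _)
    (sum_mem fun k hk => Submodule.smul_mem _ _ (ih k (mem_range.1 hk))))

theorem forwardDifference_surjective (hh : h ≠ 0) :
    Function.Surjective (forwardDifference h : K[X] → K[X]) := by
  refine LinearMap.range_eq_top.1 (Submodule.eq_top_iff'.2 fun p => ?_)
  rw [p.as_sum_range_C_mul_X_pow]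
  exact sum_mem fun i _ => by
    rw [C_mul']
    exact Submodule.smul_mem _ _ (X_pow_mem_range_forwardDifference hh i)

end Field

variable {A : Type*} [CommRing A]

noncomputable def discreteWronskian (h : A) (p q : A[X]) : A[X] :=
  p.comp (X + C h) * q - p * q.comp (X + C h)

/-- At a simple root `t` of `y`, this is `y'(t) y(t + h) y(t - h)` times the sum of the residues
of `f(x) / (y(x) y(x + h))` at `t` and at `t - h`. -/
def ResidueCondition (h : A) (y f : A[X]) (t : A) : Prop :=
  f.eval t * y.eval (t - h) + f.eval (t - h) * y.eval (t + h) = 0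

theorem discreteWronskian_sub_mul_self (h : A) (y q r : A[X]) :
    discreteWronskian h y (q - y * r) =
      discreteWronskian h y q + y * y.comp (X + C h) * forwardDifference h r := by
  simp only [discreteWronskian, forwardDifference_apply, sub_comp, mul_comp]
  ring

variable {h t : A} {y : A[X]}

theorem eval_discreteWronskian_of_isRoot (ht : y.IsRoot t) (q : A[X]) :
    (discreteWronskian h y q).eval t = y.eval (t + h) * q.eval t := by
  simp [discreteWronskian, ht.eq_zero]

theorem eval_sub_discreteWronskian_of_isRoot (ht : y.IsRoot t) (q : A[X]) :
    (discreteWronskian h y q).eval (t - h) = -(y.eval (t - h) * q.eval t) := by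
  simp [discreteWronskian, ht.eq_zero]

theorem residueCondition_of_discreteWronskian_eq {q f : A[X]} (hW : discreteWronskian h y q = f)
    (ht : y.IsRoot t) : ResidueCondition h y f t := by
  rw [ResidueCondition, ← hW, eval_discreteWronskian_of_isRoot ht,
    eval_sub_discreteWronskian_of_isRoot ht]
  ring

end Polynomial

namespace Lagrange

variable {A : Type*} [CommRing A] {ι : Type*}

theorem nodal_comp_X_add_C (s : Finset ι) (v : ι → A) (h : A) :
    (nodal s v).comp (X + C h) = nodal s (fun i => v i - h) := by
  simp only [nodal, Polynomial.prod_comp, sub_comp, X_comp, C_comp, C_sub]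
  exact prod_congr rfl fun _ _ => by ring

theorem nodal_sumElim {κ : Type*} [Fintype ι] [Fintype κ] (v : ι → A) (w : κ → A) :
    nodal univ (Sum.elim v w) = nodal univ v * nodal univ w :=
  Fintype.prod_sum_type _

theorem nodal_dvd_of_eval_eq_zero {K : Type*} [Field K] [Fintype ι] {v : ι → K}
    (hv : Function.Injective v) {f : K[X]} (hf : ∀ i, f.eval (v i) = 0) : nodal univ v ∣ f :=
  Fintype.prod_dvd_of_coprime (pairwise_coprime_X_sub_C hv) fun i => dvd_iff_isRoot.2 (hf i)

end Lagrange

theorem exists_discreteWronskian_eq_of_residueCondition {K : Type*} [Field K] [CharZero K]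
    {ι : Type*} [Fintype ι] {t : ι → K} (ht : Function.Injective t) {h : K} (hh : h ≠ 0)
    (hnc : ∀ j k, t j ≠ t k + h) (f : K[X])
    (hres : ∀ j, ResidueCondition h (nodal univ t) f (t j)) :
    ∃ q, discreteWronskian h (nodal univ t) q = f := by
  classical
  set y := nodal univ t
  have hroot : ∀ j, y.IsRoot (t j) := fun j => eval_nodal_at_node (mem_univ j)
  have hshift : ∀ j, y.eval (t j + h) ≠ 0 := fun j =>
    eval_nodal_not_at_node fun k _ => (hnc k j).symm
  set y₀ := interpolate univ t (fun j => f.eval (t j) / y.eval (t j + h))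
  have hy₀ : ∀ j, y₀.eval (t j) = f.eval (t j) / y.eval (t j + h) := fun j =>
    eval_interpolate_at_node _ ht.injOn (mem_univ j)
  have hnodes : Function.Injective (Sum.elim t (fun j => t j - h)) :=
    ht.sumElim (sub_left_injective.comp ht) fun j k e => hnc k j (by rw [e]; ring)
  obtain ⟨P, hP⟩ : y * y.comp (X + C h) ∣ f - discreteWronskian h y y₀ := by
    rw [nodal_comp_X_add_C, ← nodal_sumElim]
    refine nodal_dvd_of_eval_eq_zero hnodes ?_
    rintro (j | j)
    · rw [Sum.elim_inl, eval_sub, eval_discreteWronskian_of_isRoot (hroot j), hy₀,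
        mul_div_cancel₀ _ (hshift j), sub_self]
    · rw [Sum.elim_inr, eval_sub, eval_sub_discreteWronskian_of_isRoot (hroot j), hy₀,
        sub_eq_zero]
      field_simp [hshift j]
      rw [mul_comm (y.eval _)]
      exact eq_neg_of_add_eq_zero_right (hres j)
  obtain ⟨q, hq⟩ := forwardDifference_surjective hh P
  exact ⟨y₀ - y * q, by rw [discreteWronskian_sub_mul_self, hq, ← hP]; ring⟩

theorem wronskian_solvability_iff_residues_general (l : ℕ) (t : Fin l → ℂ)
    (ht : Function.Injective t) (h : ℂ) (hh : h ≠ 0)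
    (y : ℂ[X]) (hy : y = ∏ j, (X - C (t j)))
    (hnc : ∀ j k, t j ≠ t k + h)
    (R : ℂ[X]) :
    (∃ yt : ℂ[X], y.comp (X + C h) * yt - y * yt.comp (X + C h) = R) ↔
      ∀ j, R.eval (t j) * y.eval (t j - h) + R.eval (t j - h) * y.eval (t j + h) = 0 := by
  subst hy
  constructor
  · rintro ⟨yt, hyt⟩ j
    exact residueCondition_of_discreteWronskian_eq hyt (eval_nodal_at_node (mem_univ j))
  · exact exists_discreteWronskian_eq_of_residueCondition ht hh hnc R

/-- Existence of a polynomial solution of the discrete Wronskian equation is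
equivalent to the residue conditions at the roots of `y`. -/
theorem wronskian_solvability_iff_residues (l : ℕ) (t : Fin l → ℂ)
    (ht : Function.Injective t) (h : ℂ) (hh : h ≠ 0)
    (y : ℂ[X]) (hy : y = ∏ j, (X - C (t j)))
    (hnc : ∀ j k, t j ≠ t k + h)
    (R : ℂ[X]) (hco : IsCoprime R y)
    (hco' : ∀ j, R.eval (t j - h) ≠ 0 ∨ y.eval (t j - h) ≠ 0) :
    (∃ yt : ℂ[X], y.comp (X + C h) * yt - y * yt.comp (X + C h) = R) ↔
      ∀ j, R.eval (t j) * y.eval (t j - h) + R.eval (t j - h) * y.eval (t j + h) = 0 :=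
  wronskian_solvability_iff_residues_general l t ht h hh y hy hnc R
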